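/- Let d ≥ 1, ρ > 0, σ > 0. Let b : ℝ^d → ℝ^d be continuously differentiable and ℤ^d-periodic, and let m : ℝ^d → ℝ be twice continuously differentiable, ℤ^d-periodic, strictly positive, and satisfy (σ²/2)·Δm − div(b·m) = 0 on ℝ^d. Let φ = (φ₁, …, φ_n) : ℝ^d → ℝⁿ be twice continuously differentiable and ℤ^d-periodic, with linearly independent component functions. Define the n×n matrix H with entries H_{ij} = ∫_Q φ_i(x)·ℒφ_j(x)·m(x) dx. Then θᵀHθ > 0 for every nonzero θ ∈ ℝⁿ; in particular the symmetric part of H is positive definite and H is invertible. -/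

import Mathlib

open MeasureTheory Matrix
open scoped RealInnerProductSpace

noncomputable section

/-- `ℤ^d`-periodicity of a function on `ℝ^d`. -/
def ZdPeriodic {d : ℕ} {α : Type*} (f : EuclideanSpace ℝ (Fin d) → α) : Prop :=
  ∀ x : EuclideanSpace ℝ (Fin d), ∀ n : Fin d → ℤ,
    f (x + (WithLp.equiv 2 (Fin d → ℝ)).symm fun i => (n i : ℝ)) = f x

/-- The unit cube `Q = [0,1)^d`. -/
def unitCube (d : ℕ) : Set (EuclideanSpace ℝ (Fin d)) :=
  {x | ∀ i, x i ∈ Set.Ico (0 : ℝ) 1}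

/-- The Laplacian of `f` at `x`: the sum of the diagonal second derivatives. -/
def lapl {d : ℕ} (f : EuclideanSpace ℝ (Fin d) → ℝ) (x : EuclideanSpace ℝ (Fin d)) : ℝ :=
  ∑ i, iteratedFDeriv ℝ 2 f x ![EuclideanSpace.single i 1, EuclideanSpace.single i 1]

/-- The divergence of a vector field `F` at `x`. -/
def divg {d : ℕ} (F : EuclideanSpace ℝ (Fin d) → EuclideanSpace ℝ (Fin d))
    (x : EuclideanSpace ℝ (Fin d)) : ℝ :=
  ∑ i, fderiv ℝ (fun y => F y i) x (EuclideanSpace.single i 1)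

/-- The generator `ℒw(x) = ρ w(x) - (σ²/2) Δw(x) - b(x)·∇w(x)`. -/
def gen {d : ℕ} (ρ σ : ℝ) (b : EuclideanSpace ℝ (Fin d) → EuclideanSpace ℝ (Fin d))
    (w : EuclideanSpace ℝ (Fin d) → ℝ) (x : EuclideanSpace ℝ (Fin d)) : ℝ :=
  ρ * w x - σ ^ 2 / 2 * lapl w x - ⟪b x, gradient w x⟫

/-!
Put `w = ∑ⱼ θⱼ φⱼ`, so that `θᵀHθ = ∫_Q w · ℒw · m`. Let `J = (σ²/2) ∇m - m b` be the
probability current of `m`; stationarity of `m` says exactly that `div J = 0`. The product rule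
then gives, with `G = (w²/2) J - (σ²/2) w m ∇w`,
  `w · ℒw · m = ρ w² m + (σ²/2) m |∇w|² + div G`.
The field `G` is periodic, so by the divergence theorem `div G` integrates to zero over `Q`, and
`θᵀHθ = ∫_Q ρ w² m + (σ²/2) m |∇w|²`. This is positive because `w` is continuous, periodic and,
by linear independence of the `φᵢ`, not identically zero. The symmetric part of `H` has the same
quadratic form, and a matrix with positive quadratic form has trivial kernel.
-/

open Set

local notation "ℝ^" d:max => EuclideanSpace ℝ (Fin d)

theorem Matrix.posDef_half_smul_add_transpose {ι : Type*} [Fintype ι] {A : Matrix ι ι ℝ}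
    (hA : ∀ θ, θ ≠ 0 → 0 < θ ⬝ᵥ A *ᵥ θ) : ((1 / 2 : ℝ) • (A + Aᵀ)).PosDef := by
  refine posDef_iff_dotProduct_mulVec.2 ⟨?_, fun θ hθ => ?_⟩
  · simp [IsHermitian, conjTranspose_eq_transpose_of_trivial, transpose_add, add_comm]
  · have htranspose : θ ⬝ᵥ Aᵀ *ᵥ θ = θ ⬝ᵥ A *ᵥ θ := by
      rw [dotProduct_mulVec, vecMul_transpose, dotProduct_comm]
    rw [star_trivial, smul_mulVec, add_mulVec, dotProduct_smul, dotProduct_add, htranspose]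
    simpa [smul_eq_mul] using hA θ hθ

theorem Matrix.isUnit_of_forall_dotProduct_mulVec_pos {ι : Type*} [Fintype ι] [DecidableEq ι]
    {A : Matrix ι ι ℝ} (hA : ∀ θ, θ ≠ 0 → 0 < θ ⬝ᵥ A *ᵥ θ) : IsUnit A := by
  rw [isUnit_iff_isUnit_det, isUnit_iff_ne_zero]
  intro hdet
  obtain ⟨θ, hθ, hAθ⟩ := exists_mulVec_eq_zero_iff.2 hdet
  simpa [hAθ] using hA θ hθ

theorem dotProduct_mulVec_eq_integral {X ι : Type*} [MeasurableSpace X] [Fintype ι]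
    {μ : Measure X} {A : Matrix ι ι ℝ} {u v : ι → X → ℝ}
    (hA : ∀ i j, A i j = ∫ x, u i x * v j x ∂μ)
    (huv : ∀ i j, Integrable (fun x => u i x * v j x) μ) (θ : ι → ℝ) :
    θ ⬝ᵥ A *ᵥ θ = ∫ x, (∑ i, θ i * u i x) * (∑ j, θ j * v j x) ∂μ := by
  have hint : ∀ i j, Integrable (fun x => θ i * θ j * (u i x * v j x)) μ := fun i j =>
    (huv i j).const_mul _
  calc θ ⬝ᵥ A *ᵥ θ = ∑ i, ∑ j, ∫ x, θ i * θ j * (u i x * v j x) ∂μ := by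
        refine Finset.sum_congr rfl fun i _ => ?_
        rw [mulVec, dotProduct, Finset.mul_sum]
        refine Finset.sum_congr rfl fun j _ => ?_
        rw [hA, integral_const_mul]
        ring
    _ = ∫ x, ∑ i, ∑ j, θ i * θ j * (u i x * v j x) ∂μ := by
        rw [integral_finsetSum _ fun i _ => integrable_finsetSum _ fun j _ => hint i j]
        exact Finset.sum_congr rfl fun i _ => (integral_finsetSum _ fun j _ => hint i j).symm
    _ = ∫ x, (∑ i, θ i * u i x) * (∑ j, θ j * v j x) ∂μ := by
        simp only [Finset.sum_mul_sum, mul_mul_mul_comm]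

theorem LinearIndependent.exists_sum_mul_ne_zero {ι X : Type*} [Fintype ι] {φ : ι → X → ℝ}
    (hφ : LinearIndependent ℝ φ) {θ : ι → ℝ} (hθ : θ ≠ 0) : ∃ x, ∑ i, θ i * φ i x ≠ 0 := by
  by_contra! h
  exact hθ (funext (Fintype.linearIndependent_iff.1 hφ θ (funext fun x => by simpa using h x)))

theorem integral_sum_fderiv_eq_zero_of_periodic {n : ℕ}
    (f : Fin (n + 1) → (Fin (n + 1) → ℝ) → ℝ) (hf : ∀ i, ContDiff ℝ 1 (f i))
    (hper : ∀ i x, f i (x + Pi.single i 1) = f i x) :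
    ∫ x in Icc (0 : Fin (n + 1) → ℝ) 1, ∑ i, fderiv ℝ (f i) x (Pi.single i 1) = 0 := by
  rw [integral_divergence_of_hasFDerivAt_off_countable' 0 1 zero_le_one f
    (fun i => fderiv ℝ (f i)) ∅ countable_empty (fun i => (hf i).continuous.continuousOn)
    (fun x _ i => ((hf i).differentiable one_ne_zero x).hasFDerivAt)
    (Continuous.integrableOn_Icc (continuous_finsetSum _ fun i _ =>
      ((hf i).continuous_fderiv one_ne_zero).clm_apply continuous_const))]
  refine Finset.sum_eq_zero fun i _ => sub_eq_zero.2 (integral_congr_ae (ae_of_all _ fun x => ?_))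
  have hface := Fin.insertNth_sub_same (α := fun _ => ℝ) i 1 0 x
  rw [sub_zero, sub_eq_iff_eq_add'] at hface
  simp only [Pi.one_apply, Pi.zero_apply, hface, hper]

section UnitCube

variable {d : ℕ}

theorem setIntegral_unitCube (f : ℝ^d → ℝ) :
    ∫ x in unitCube d, f x = ∫ y in Icc (0 : Fin d → ℝ) 1, f (WithLp.toLp 2 y) := by
  have hcube : unitCube d
      = (MeasurableEquiv.toLp 2 (Fin d → ℝ)).symm ⁻¹' pi univ fun _ => Ico 0 1 := by
    ext x
    simp [unitCube]
  have hIco : (pi univ fun _ => Ico 0 1 : Set (Fin d → ℝ)) =ᵐ[volume] Icc 0 1 := by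
    rw [volume_pi]
    exact Measure.univ_pi_Ico_ae_eq_Icc
  rw [hcube, ← setIntegral_congr_set hIco]
  exact (EuclideanSpace.volume_preserving_symm_measurableEquiv_toLp
    (Fin d)).setIntegral_preimage_emb (MeasurableEquiv.measurableEmbedding _)
    (fun y => f (WithLp.toLp 2 y)) _

theorem Continuous.integrableOn_unitCube {f : ℝ^d → ℝ} (hf : Continuous f) :
    IntegrableOn f (unitCube d) :=
  (hf.continuousOn.integrableOn_compact
    ((PiLp.homeomorph 2 fun _ : Fin d => ℝ).isCompact_preimage.2 isCompact_Icc)).mono_set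
    fun _ hx => ⟨fun i => (hx i).1, fun i => (hx i).2.le⟩

theorem setIntegral_unitCube_pos {f : ℝ^d → ℝ} (hf : Continuous f) (hf0 : ∀ x, 0 ≤ f x)
    (hper : ZdPeriodic f) {x₀ : ℝ^d} (hx₀ : 0 < f x₀) :
    0 < ∫ x in unitCube d, f x := by
  set g : (Fin d → ℝ) → ℝ := fun y => f (WithLp.toLp 2 y)
  have hg : Continuous g := hf.comp (PiLp.continuous_toLp 2 _)
  have hfract : g (fun i => Int.fract (x₀ i)) = f x₀ := by
    convert hper x₀ fun i => -⌊x₀ i⌋ using 2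
    ext i
    simp [Int.fract, sub_eq_add_neg]
  -- `fract x₀` lies in the closed cube, so the open set `{g > 0}` meets the open cube.
  have hclosure : (fun i => Int.fract (x₀ i)) ∈ closure (pi univ fun _ => Ioo (0 : ℝ) 1) := by
    rw [closure_pi_set, closure_Ioo zero_ne_one]
    exact fun i _ => ⟨Int.fract_nonneg _, (Int.fract_lt_one _).le⟩
  have hU : IsOpen ({y | 0 < g y} ∩ pi univ fun _ => Ioo (0 : ℝ) 1) :=
    (isOpen_lt continuous_const hg).inter (isOpen_set_pi finite_univ fun _ _ => isOpen_Ioo)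
  rw [setIntegral_unitCube, setIntegral_pos_iff_support_of_nonneg_ae
    (ae_of_all _ fun y => hf0 _) hg.integrableOn_Icc]
  calc 0 < volume ({y | 0 < g y} ∩ pi univ fun _ => Ioo (0 : ℝ) 1) :=
        hU.measure_pos _ (mem_closure_iff.1 hclosure _ (isOpen_lt continuous_const hg)
          (by rw [mem_ofPred_eq, hfract]; exact hx₀))
    _ ≤ volume (Function.support g ∩ Icc 0 1) :=
        measure_mono fun y hy =>
          ⟨hy.1.ne', fun i => (hy.2 i trivial).1.le, fun i => (hy.2 i trivial).2.le⟩

theorem integral_unitCube_divg_eq_zero {F : ℝ^d → ℝ^d} (hF : ContDiff ℝ 1 F)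
    (hper : ZdPeriodic F) : ∫ x in unitCube d, divg F x = 0 := by
  cases d with
  | zero => simp [divg]
  | succ n =>
    have hshift : ∀ (y : Fin (n + 1) → ℝ) i, WithLp.toLp 2 (y + Pi.single i 1)
        = WithLp.toLp 2 y
          + (WithLp.equiv 2 _).symm fun j => ((Pi.single i 1 : Fin (n + 1) → ℤ) j : ℝ) := by
      intro y i
      ext j
      by_cases h : j = i <;> simp [Pi.single_apply, h]
    rw [setIntegral_unitCube]
    convert integral_sum_fderiv_eq_zero_of_periodic (fun i y => F (WithLp.toLp 2 y) i)
      (fun i => (contDiff_euclidean.1 hF i).comp (PiLp.contDiff_toLp ..))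
      (fun i y => by rw [hshift, hper]) using 3 with y
    refine Finset.sum_congr rfl fun i _ => ?_
    rw [show (fun y => F (WithLp.toLp 2 y) i)
        = (fun z => F z i) ∘ (PiLp.continuousLinearEquiv 2 ℝ fun _ : Fin (n + 1) => ℝ).symm
        from rfl, ContinuousLinearEquiv.comp_right_fderiv]
    simp [PiLp.toLp_single]

theorem continuous_divg {F : ℝ^d → ℝ^d} (hF : ContDiff ℝ 1 F) : Continuous (divg F) :=
  continuous_finsetSum _ fun i _ =>
    ((contDiff_euclidean.1 hF i).continuous_fderiv one_ne_zero).clm_apply continuous_const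

end UnitCube

section PartialDeriv

variable {d : ℕ}

def partialDeriv (i : Fin d) (f : ℝ^d → ℝ) (x : ℝ^d) : ℝ :=
  fderiv ℝ f x (EuclideanSpace.single i 1)

theorem ContDiff.partialDeriv {f : ℝ^d → ℝ} {m n : WithTop ℕ∞} (hf : ContDiff ℝ n f)
    (hmn : m + 1 ≤ n) (i : Fin d) : ContDiff ℝ m (partialDeriv i f) :=
  (hf.fderiv_right hmn).clm_apply contDiff_const

theorem ZdPeriodic.partialDeriv {f : ℝ^d → ℝ} (hf : ZdPeriodic f) (i : Fin d) :
    ZdPeriodic (partialDeriv i f) := by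
  intro x k
  have hshift : (fun y => f (y + _)) = f := funext fun y => hf y k
  show fderiv ℝ f _ _ = fderiv ℝ f x _
  rw [← fderiv_comp_add_right, hshift]

variable {x : ℝ^d} {f g : ℝ^d → ℝ}

theorem partialDeriv_const (c : ℝ) (i : Fin d) : partialDeriv i (fun _ => c) x = 0 := by
  simp [partialDeriv]

theorem partialDeriv_fun_sub (hf : DifferentiableAt ℝ f x) (hg : DifferentiableAt ℝ g x)
    (i : Fin d) :
    partialDeriv i (fun y => f y - g y) x = partialDeriv i f x - partialDeriv i g x := by
  simp [partialDeriv, fderiv_fun_sub hf hg]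

theorem partialDeriv_fun_mul (hf : DifferentiableAt ℝ f x) (hg : DifferentiableAt ℝ g x)
    (i : Fin d) :
    partialDeriv i (fun y => f y * g y) x
      = partialDeriv i f x * g x + f x * partialDeriv i g x := by
  simp only [partialDeriv, fderiv_fun_mul hf hg, _root_.add_apply, _root_.smul_apply, smul_eq_mul]
  ring

theorem partialDeriv_const_mul (hf : DifferentiableAt ℝ f x) (c : ℝ) (i : Fin d) :
    partialDeriv i (fun y => c * f y) x = c * partialDeriv i f x := by
  simp [partialDeriv, fderiv_const_mul hf]

theorem partialDeriv_fun_div_const (hf : DifferentiableAt ℝ f x) (c : ℝ) (i : Fin d) :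
    partialDeriv i (fun y => f y / c) x = partialDeriv i f x / c := by
  simp [div_eq_mul_inv, partialDeriv, fderiv_mul_const hf, mul_comm]

theorem partialDeriv_fun_sum_mul {ι : Type*} {s : Finset ι} {f : ι → ℝ^d → ℝ}
    (hf : ∀ j ∈ s, DifferentiableAt ℝ (f j) x) (c : ι → ℝ) (i : Fin d) :
    partialDeriv i (fun y => ∑ j ∈ s, c j * f j y) x
      = ∑ j ∈ s, c j * partialDeriv i (f j) x := by
  rw [partialDeriv, fderiv_fun_sum fun j hj => (hf j hj).const_mul (c j)]
  simp only [FunLike.coe_sum, Finset.sum_apply]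
  exact Finset.sum_congr rfl fun j hj => partialDeriv_const_mul (hf j hj) (c j) i

theorem lapl_eq_sum_partialDeriv (hf : ContDiff ℝ 2 f) (x : ℝ^d) :
    lapl f x = ∑ i, partialDeriv i (partialDeriv i f) x := by
  refine Finset.sum_congr rfl fun i _ => ?_
  rw [iteratedFDeriv_two_apply]
  change _ = fderiv ℝ (fun y => fderiv ℝ f y (EuclideanSpace.single i 1)) x _
  rw [fderiv_clm_apply ((hf.fderiv_right le_rfl).differentiable one_ne_zero x)
    (differentiableAt_const _)]
  simp

theorem inner_gradient_eq_sum (v : ℝ^d) (f : ℝ^d → ℝ) (x : ℝ^d) :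
    ⟪v, gradient f x⟫ = ∑ i, v i * partialDeriv i f x := by
  rw [real_inner_comm, inner_gradient_left]
  conv_lhs => rw [← (EuclideanSpace.basisFun (Fin d) ℝ).sum_repr v]
  simp [partialDeriv, map_sum]

theorem divg_eq_sum_partialDeriv (F : ℝ^d → ℝ^d) (x : ℝ^d) :
    divg F x = ∑ i, partialDeriv i (fun y => F y i) x :=
  rfl

end PartialDeriv

section Generator

variable {d : ℕ} {ρ σ : ℝ} {b : ℝ^d → ℝ^d}

theorem gen_eq_sum {f : ℝ^d → ℝ} (hf : ContDiff ℝ 2 f) (x : ℝ^d) :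
    gen ρ σ b f x = ρ * f x - σ ^ 2 / 2 * ∑ i, partialDeriv i (partialDeriv i f) x
      - ∑ i, b x i * partialDeriv i f x := by
  rw [gen, lapl_eq_sum_partialDeriv hf, inner_gradient_eq_sum]

theorem gen_fun_sum_mul {ι : Type*} [Fintype ι] {φ : ι → ℝ^d → ℝ}
    (hφ : ∀ j, ContDiff ℝ 2 (φ j)) (c : ι → ℝ) (x : ℝ^d) :
    gen ρ σ b (fun y => ∑ j, c j * φ j y) x = ∑ j, c j * gen ρ σ b (φ j) x := by
  have hderiv : ∀ i, partialDeriv i (fun y => ∑ j, c j * φ j y)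
      = fun y => ∑ j, c j * partialDeriv i (φ j) y := fun i => funext fun y =>
    partialDeriv_fun_sum_mul (fun j _ => (hφ j).differentiable two_ne_zero y) c i
  have hderiv2 : ∀ i, partialDeriv i (fun y => ∑ j, c j * partialDeriv i (φ j) y) x
      = ∑ j, c j * partialDeriv i (partialDeriv i (φ j)) x := fun i =>
    partialDeriv_fun_sum_mul
      (fun j _ => ((hφ j).partialDeriv le_rfl i).differentiable one_ne_zero x) c i
  rw [gen_eq_sum (ContDiff.sum fun j _ => contDiff_const.mul (hφ j))]
  simp only [hderiv, hderiv2, gen_eq_sum (hφ _), Finset.mul_sum, mul_sub, Finset.sum_sub_distrib]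
  rw [Finset.sum_comm (f := fun i j => σ ^ 2 / 2 * _),
    Finset.sum_comm (f := fun i j => b x i * _)]
  simp only [mul_left_comm]

theorem continuous_gen {f : ℝ^d → ℝ} (hf : ContDiff ℝ 2 f) (hb : Continuous b) :
    Continuous (gen ρ σ b f) := by
  have hfi : ∀ i, Continuous (partialDeriv i f) := fun i =>
    (hf.partialDeriv (m := 1) le_rfl i).continuous
  have hfii : ∀ i, Continuous (partialDeriv i (partialDeriv i f)) := fun i =>
    ((hf.partialDeriv (m := 1) le_rfl i).partialDeriv (m := 0) le_rfl i).continuous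
  have hbi : ∀ i, Continuous fun y => b y i := fun i => (PiLp.continuous_apply 2 _ i).comp hb
  rw [funext (gen_eq_sum hf)]
  fun_prop

end Generator

section Energy

variable {d : ℕ} {σ : ℝ} {b : ℝ^d → ℝ^d} {m w : ℝ^d → ℝ}

def probabilityCurrent (σ : ℝ) (b : ℝ^d → ℝ^d) (m : ℝ^d → ℝ) (i : Fin d) (y : ℝ^d) : ℝ :=
  σ ^ 2 / 2 * partialDeriv i m y - m y * b y i

def energyFlux (σ : ℝ) (b : ℝ^d → ℝ^d) (m w : ℝ^d → ℝ) (y : ℝ^d) : ℝ^d :=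
  WithLp.toLp 2 fun i =>
    w y * w y / 2 * probabilityCurrent σ b m i y - σ ^ 2 / 2 * (w y * m y * partialDeriv i w y)

def energyDensity (ρ σ : ℝ) (m w : ℝ^d → ℝ) (y : ℝ^d) : ℝ :=
  ρ * (w y ^ 2 * m y) + σ ^ 2 / 2 * (m y * ∑ i, partialDeriv i w y ^ 2)

theorem contDiff_probabilityCurrent (hm : ContDiff ℝ 2 m) (hb : ContDiff ℝ 1 b) (i : Fin d) :
    ContDiff ℝ 1 (probabilityCurrent σ b m i) :=
  (contDiff_const.mul (hm.partialDeriv le_rfl i)).sub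
    ((hm.of_le one_le_two).mul (contDiff_euclidean.1 hb i))

theorem sum_partialDeriv_probabilityCurrent (hm : ContDiff ℝ 2 m) (hb : ContDiff ℝ 1 b)
    (x : ℝ^d) :
    ∑ i, partialDeriv i (probabilityCurrent σ b m i) x
      = σ ^ 2 / 2 * lapl m x - divg (fun y => m y • b y) x := by
  rw [lapl_eq_sum_partialDeriv hm, divg_eq_sum_partialDeriv, Finset.mul_sum,
    ← Finset.sum_sub_distrib]
  refine Finset.sum_congr rfl fun i _ => ?_
  have hm1 : Differentiable ℝ m := hm.differentiable two_ne_zero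
  have hmi : Differentiable ℝ (partialDeriv i m) :=
    (hm.partialDeriv le_rfl i).differentiable one_ne_zero
  have hbi : Differentiable ℝ fun y => b y i :=
    (contDiff_euclidean.1 hb i).differentiable one_ne_zero
  unfold probabilityCurrent
  simp (disch := fun_prop) only [partialDeriv_fun_sub, partialDeriv_const_mul]
  rfl

theorem partialDeriv_energyFlux (hw : ContDiff ℝ 2 w) (hm : ContDiff ℝ 2 m)
    (hb : ContDiff ℝ 1 b) (i : Fin d) (x : ℝ^d) :
    partialDeriv i (fun y => energyFlux σ b m w y i) x
      = w x * w x / 2 * partialDeriv i (probabilityCurrent σ b m i) x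
        - w x * m x * (b x i * partialDeriv i w x)
        - σ ^ 2 / 2 * (m x * partialDeriv i w x ^ 2)
        - σ ^ 2 / 2 * (w x * m x * partialDeriv i (partialDeriv i w) x) := by
  have hw1 : Differentiable ℝ w := hw.differentiable two_ne_zero
  have hm1 : Differentiable ℝ m := hm.differentiable two_ne_zero
  have hwi : Differentiable ℝ (partialDeriv i w) :=
    (hw.partialDeriv le_rfl i).differentiable one_ne_zero
  have hJ : Differentiable ℝ (probabilityCurrent σ b m i) :=
    (contDiff_probabilityCurrent hm hb i).differentiable one_ne_zero
  simp (disch := fun_prop) only [energyFlux, PiLp.toLp_apply, partialDeriv_fun_sub,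
    partialDeriv_fun_mul, partialDeriv_fun_div_const, partialDeriv_const]
  rw [probabilityCurrent]
  ring

theorem mul_gen_mul_eq_energyDensity_add_divg (ρ : ℝ) (hw : ContDiff ℝ 2 w)
    (hm : ContDiff ℝ 2 m) (hb : ContDiff ℝ 1 b) {x : ℝ^d}
    (hstat : σ ^ 2 / 2 * lapl m x - divg (fun y => m y • b y) x = 0) :
    w x * gen ρ σ b w x * m x = energyDensity ρ σ m w x + divg (energyFlux σ b m w) x := by
  simp only [divg_eq_sum_partialDeriv, partialDeriv_energyFlux hw hm hb, Finset.sum_sub_distrib,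
    ← Finset.mul_sum]
  rw [sum_partialDeriv_probabilityCurrent hm hb, hstat, gen_eq_sum hw, energyDensity]
  ring

theorem contDiff_energyFlux (hw : ContDiff ℝ 2 w) (hm : ContDiff ℝ 2 m) (hb : ContDiff ℝ 1 b) :
    ContDiff ℝ 1 (energyFlux σ b m w) := by
  refine contDiff_euclidean.2 fun i => ?_
  have hw1 : ContDiff ℝ 1 w := hw.of_le one_le_two
  have hm1 : ContDiff ℝ 1 m := hm.of_le one_le_two
  have hwi : ContDiff ℝ 1 (partialDeriv i w) := hw.partialDeriv le_rfl i
  have hJ : ContDiff ℝ 1 (probabilityCurrent σ b m i) := contDiff_probabilityCurrent hm hb i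
  simp only [energyFlux, PiLp.toLp_apply]
  fun_prop

theorem zdPeriodic_energyFlux (hw : ZdPeriodic w) (hm : ZdPeriodic m) (hb : ZdPeriodic b) :
    ZdPeriodic (energyFlux σ b m w) := by
  intro x k
  have hwi : ∀ i, partialDeriv i w _ = partialDeriv i w x := fun i => hw.partialDeriv i x k
  have hmi : ∀ i, partialDeriv i m _ = partialDeriv i m x := fun i => hm.partialDeriv i x k
  simp only [energyFlux, probabilityCurrent, hw x k, hm x k, hb x k, hwi, hmi]

end Energy

theorem setIntegral_mul_gen_mul_pos {d : ℕ} {ρ σ : ℝ} (hρ : 0 < ρ) {b : ℝ^d → ℝ^d}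
    (hb : ContDiff ℝ 1 b) (hbper : ZdPeriodic b) {m : ℝ^d → ℝ} (hm : ContDiff ℝ 2 m)
    (hmper : ZdPeriodic m) (hmpos : ∀ x, 0 < m x)
    (hstat : ∀ x, σ ^ 2 / 2 * lapl m x - divg (fun y => m y • b y) x = 0)
    {w : ℝ^d → ℝ} (hw : ContDiff ℝ 2 w) (hwper : ZdPeriodic w) {x₀ : ℝ^d} (hx₀ : w x₀ ≠ 0) :
    0 < ∫ x in unitCube d, w x * gen ρ σ b w x * m x := by
  have hwi : ∀ i, Continuous (partialDeriv i w) := fun i =>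
    (hw.partialDeriv (m := 1) le_rfl i).continuous
  have hE : Continuous (energyDensity ρ σ m w) := by
    have hwc := hw.continuous
    have hmc := hm.continuous
    unfold energyDensity
    fun_prop
  have hE0 : ∀ x, 0 ≤ energyDensity ρ σ m w x := fun x => by
    have := hmpos x
    unfold energyDensity
    positivity
  have hEper : ZdPeriodic (energyDensity ρ σ m w) := fun x k => by
    simp only [energyDensity, hwper x k, hmper x k, fun i => hwper.partialDeriv i x k]
  have hEpos : 0 < energyDensity ρ σ m w x₀ := by
    have := hmpos x₀
    unfold energyDensity
    positivity
  have hflux := integral_unitCube_divg_eq_zero (contDiff_energyFlux (σ := σ) hw hm hb)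
    (zdPeriodic_energyFlux hwper hmper hbper)
  calc 0 < ∫ x in unitCube d, energyDensity ρ σ m w x :=
        setIntegral_unitCube_pos hE hE0 hEper hEpos
    _ = ∫ x in unitCube d, (energyDensity ρ σ m w x + divg (energyFlux σ b m w) x) := by
        rw [integral_add hE.integrableOn_unitCube
          (continuous_divg (contDiff_energyFlux hw hm hb)).integrableOn_unitCube, hflux, add_zero]
    _ = ∫ x in unitCube d, w x * gen ρ σ b w x * m x :=
        integral_congr_ae (ae_of_all _ fun x =>
          (mul_gen_mul_eq_energyDensity_add_divg ρ hw hm hb (hstat x)).symm)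

theorem feature_matrix_posdef_general
    (d n : ℕ) (ρ σ : ℝ) (hρ : 0 < ρ)
    (b : EuclideanSpace ℝ (Fin d) → EuclideanSpace ℝ (Fin d))
    (hb : ContDiff ℝ 1 b) (hbper : ZdPeriodic b)
    (m : EuclideanSpace ℝ (Fin d) → ℝ)
    (hm : ContDiff ℝ 2 m) (hmper : ZdPeriodic m) (hmpos : ∀ x, 0 < m x)
    (hstat : ∀ x, σ ^ 2 / 2 * lapl m x - divg (fun y => m y • b y) x = 0)
    (φ : Fin n → EuclideanSpace ℝ (Fin d) → ℝ)
    (hφ : ∀ i, ContDiff ℝ 2 (φ i)) (hφper : ∀ i, ZdPeriodic (φ i))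
    (hφli : LinearIndependent ℝ φ)
    (H : Matrix (Fin n) (Fin n) ℝ)
    (hH : ∀ i j, H i j = ∫ x in unitCube d, φ i x * gen ρ σ b (φ j) x * m x) :
    (∀ θ : Fin n → ℝ, θ ≠ 0 → 0 < θ ⬝ᵥ H.mulVec θ) ∧
    (((1 : ℝ) / 2) • (H + Hᵀ)).PosDef ∧ IsUnit H := by
  have hquad : ∀ θ : Fin n → ℝ, θ ≠ 0 → 0 < θ ⬝ᵥ H.mulVec θ := by
    intro θ hθ
    obtain ⟨x₀, hx₀⟩ := hφli.exists_sum_mul_ne_zero hθ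
    have hgen : ∀ j, Continuous fun x => gen ρ σ b (φ j) x * m x := fun j =>
      (continuous_gen (hφ j) hb.continuous).mul hm.continuous
    rw [dotProduct_mulVec_eq_integral (v := fun j x => gen ρ σ b (φ j) x * m x)
      (fun i j => by simp only [hH, mul_assoc])
      (fun i j => ((hφ i).continuous.mul (hgen j)).integrableOn_unitCube) θ]
    simp only [← mul_assoc, ← Finset.sum_mul, ← gen_fun_sum_mul hφ]
    exact setIntegral_mul_gen_mul_pos hρ hb hbper hm hmper hmpos hstat
      (ContDiff.sum fun j _ => contDiff_const.mul (hφ j))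
      (fun x k => by simp only [hφper _ x k]) hx₀
  exact ⟨hquad, posDef_half_smul_add_transpose hquad, isUnit_of_forall_dotProduct_mulVec_pos hquad⟩

/-- The feature matrix `H_{ij} = ∫_Q φ_i ℒφ_j m` has positive-definite symmetric part:
`θᵀHθ > 0` for every `θ ≠ 0`; in particular `H` is invertible. -/
theorem feature_matrix_posdef
    (d n : ℕ) (hd : 1 ≤ d) (ρ σ : ℝ) (hρ : 0 < ρ) (hσ : 0 < σ)
    (b : EuclideanSpace ℝ (Fin d) → EuclideanSpace ℝ (Fin d))
    (hb : ContDiff ℝ 1 b) (hbper : ZdPeriodic b)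
    (m : EuclideanSpace ℝ (Fin d) → ℝ)
    (hm : ContDiff ℝ 2 m) (hmper : ZdPeriodic m) (hmpos : ∀ x, 0 < m x)
    (hstat : ∀ x, σ ^ 2 / 2 * lapl m x - divg (fun y => m y • b y) x = 0)
    (φ : Fin n → EuclideanSpace ℝ (Fin d) → ℝ)
    (hφ : ∀ i, ContDiff ℝ 2 (φ i)) (hφper : ∀ i, ZdPeriodic (φ i))
    (hφli : LinearIndependent ℝ φ)
    (H : Matrix (Fin n) (Fin n) ℝ)
    (hH : ∀ i j, H i j = ∫ x in unitCube d, φ i x * gen ρ σ b (φ j) x * m x) :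
    (∀ θ : Fin n → ℝ, θ ≠ 0 → 0 < θ ⬝ᵥ H.mulVec θ) ∧
    (((1 : ℝ) / 2) • (H + Hᵀ)).PosDef ∧ IsUnit H :=
  feature_matrix_posdef_general d n ρ σ hρ b hb hbper m hm hmper hmpos hstat φ hφ hφper hφli H hH
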